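/- For a = b = 1, the function φ(ρ,x) = cos(ρx) + (x(2+x))j₀(ρx) + (x³/(1+x))j₂(ρx) solves -y'' + q(x)y = ρ² y on (0,π) with q(x) = 2/(1+x)², φ(ρ,0) = 1, φ'(ρ,0) = 2, where j₀(z) = sin(z)/z and j₂(z) = (3/z³ - 1/z)sin z - (3/z²)cos z are spherical Bessel functions. -/

import Mathlib

/-!
With `w = 1/(1+x)` one has `w' = -w²`, so `-d² + 2/(1+x)²` factors as `A*A` and `-d²` as `AA*`,
where `A = d + w` and `A* = -d + w`. Hence `A*` maps solutions of `-v'' = ρ² v` to solutions of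
`-y'' + 2/(1+x)² y = ρ² y` (a Darboux transformation), and `φ` is `A*` applied to
`v = (3/ρ²) cos ρx + ((3 - ρ²)/ρ³) sin ρx`.
-/

open Real Set

section Darboux

variable {ρ : ℂ} {U : Set ℝ} {f w w' v v' : ℝ → ℂ} {x : ℝ}

def darbouxTransform (w v v' : ℝ → ℂ) (x : ℝ) : ℂ := -v' x + w x * v x

theorem hasDerivAt_darbouxTransform (hw : HasDerivAt w (w' x) x) (hv : HasDerivAt v (v' x) x)
    (hv' : HasDerivAt v' ((w x ^ 2 + w' x - ρ ^ 2) * v x) x) :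
    HasDerivAt (darbouxTransform w v v') ((ρ ^ 2 - w x ^ 2) * v x + w x * v' x) x :=
  (hv'.neg.add (hw.mul hv)).congr_deriv (by ring)

theorem deriv_eq_of_eqOn_darbouxTransform (hU : IsOpen U)
    (hf : EqOn f (darbouxTransform w v v') U) (hw : ∀ x ∈ U, HasDerivAt w (w' x) x)
    (hv : ∀ x ∈ U, HasDerivAt v (v' x) x)
    (hv' : ∀ x ∈ U, HasDerivAt v' ((w x ^ 2 + w' x - ρ ^ 2) * v x) x) :
    EqOn (deriv f) (fun x => (ρ ^ 2 - w x ^ 2) * v x + w x * v' x) U := fun x hx =>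
  ((hasDerivAt_darbouxTransform (hw x hx) (hv x hx) (hv' x hx)).congr_of_eventuallyEq
    (hf.eventuallyEq_of_mem (hU.mem_nhds hx))).deriv

theorem darbouxTransform_solves_of_eqOn (hU : IsOpen U)
    (hf : EqOn f (darbouxTransform w v v') U) (hw : ∀ x ∈ U, HasDerivAt w (w' x) x)
    (hv : ∀ x ∈ U, HasDerivAt v (v' x) x)
    (hv' : ∀ x ∈ U, HasDerivAt v' ((w x ^ 2 + w' x - ρ ^ 2) * v x) x) (hx : x ∈ U) :
    -deriv (deriv f) x + (w x ^ 2 - w' x) * f x = ρ ^ 2 * f x := by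
  have hdf := deriv_eq_of_eqOn_darbouxTransform hU hf hw hv hv'
  have hd2 : HasDerivAt (fun x => (ρ ^ 2 - w x ^ 2) * v x + w x * v' x)
      ((-(2 * w x * w' x)) * v x + (ρ ^ 2 - w x ^ 2) * v' x
        + (w' x * v' x + w x * ((w x ^ 2 + w' x - ρ ^ 2) * v x))) x := by
    have hw2 : HasDerivAt (fun x => ρ ^ 2 - w x ^ 2) (-(2 * w x * w' x)) x :=
      (((hw x hx).pow 2).const_sub (ρ ^ 2)).congr_deriv (by ring)
    exact (hw2.mul (hv x hx)).add ((hw x hx).mul (hv' x hx))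
  rw [(hd2.congr_of_eventuallyEq (hdf.eventuallyEq_of_mem (hU.mem_nhds hx))).deriv, hf hx,
    darbouxTransform]
  ring

end Darboux

noncomputable def trigComb (ρ α β : ℂ) (x : ℝ) : ℂ := α * Complex.cos (ρ * x) + β * Complex.sin (ρ * x)

theorem hasDerivAt_trigComb (ρ α β : ℂ) (x : ℝ) :
    HasDerivAt (trigComb ρ α β) (trigComb ρ (ρ * β) (-(ρ * α)) x) x := by
  have hlin : HasDerivAt (fun y : ℂ => ρ * y) ρ x := by
    simpa using (hasDerivAt_id (x : ℂ)).const_mul ρ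
  have h := (((Complex.hasDerivAt_cos _).comp _ hlin).const_mul α).add
    (((Complex.hasDerivAt_sin _).comp _ hlin).const_mul β)
  exact h.comp_ofReal.congr_deriv (by simp only [trigComb]; ring)

theorem hasDerivAt_inv_one_add {x : ℝ} (hx : 1 + (x : ℂ) ≠ 0) :
    HasDerivAt (fun y : ℝ => (1 + (y : ℂ))⁻¹) (-((1 + (x : ℂ)) ^ 2)⁻¹) x := by
  have h := (((hasDerivAt_id (x : ℂ)).const_add 1).inv hx).comp_ofReal
  exact h.congr_deriv (by rw [neg_div, one_div]; rfl)

theorem one_add_ofReal_ne_zero {x : ℝ} (hx : -1 < x) : 1 + (x : ℂ) ≠ 0 := by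
  exact_mod_cast (by linarith : (1 + x) ≠ 0)

theorem cos_add_sphericalBessel_eq_darbouxTransform {ρ : ℂ} (hρ : ρ ≠ 0) {x : ℝ}
    (hx : 1 + (x : ℂ) ≠ 0) :
    Complex.cos (ρ * x) + ((x : ℂ) * (2 + x)) * (Complex.sin (ρ * x) / (ρ * x))
      + ((x : ℂ) ^ 3 / (1 + x)) * ((3 / (ρ * x) ^ 3 - 1 / (ρ * x)) * Complex.sin (ρ * x)
        - 3 / (ρ * x) ^ 2 * Complex.cos (ρ * x))
      = darbouxTransform (fun y : ℝ => (1 + (y : ℂ))⁻¹)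
          (trigComb ρ (3 / ρ ^ 2) ((3 - ρ ^ 2) / ρ ^ 3))
          (trigComb ρ (ρ * ((3 - ρ ^ 2) / ρ ^ 3)) (-(ρ * (3 / ρ ^ 2)))) x := by
  simp only [darbouxTransform, trigComb]
  rcases eq_or_ne (x : ℂ) 0 with h0 | h0
  · simp only [h0]
    field_simp
    simp
    ring
  · field_simp
    ring

/-- For `a = b = 1`, the function
`φ(ρ,x) = cos(ρx) + x(2+x) j₀(ρx) + (x³/(1+x)) j₂(ρx)` solves
`-y'' + q y = ρ² y` with `q(x) = 2/(1+x)²`, `φ(ρ,0) = 1`, `φ'(ρ,0) = 2`. -/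
theorem stmt_9 (ρ : ℂ) (hρ : ρ ≠ 0)
    (j₀ j₂ : ℂ → ℂ)
    (hj₀ : ∀ z, j₀ z = Complex.sin z / z)
    (hj₂ : ∀ z, j₂ z = (3 / z ^ 3 - 1 / z) * Complex.sin z - (3 / z ^ 2) * Complex.cos z)
    (φ : ℝ → ℂ)
    (hφ : φ = fun x : ℝ => Complex.cos (ρ * x) + ((x : ℂ) * (2 + (x : ℂ))) * j₀ (ρ * x)
      + ((x : ℂ) ^ 3 / (1 + (x : ℂ))) * j₂ (ρ * x))
    (q : ℝ → ℝ) (hqdef : q = fun x => 2 / (1 + x) ^ 2) :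
    (∀ x ∈ Ioo (0:ℝ) π, -(deriv (deriv φ) x) + (q x : ℂ) * φ x = ρ ^ 2 * φ x) ∧
    φ 0 = 1 ∧ deriv φ 0 = 2 := by
  set w : ℝ → ℂ := fun x => (1 + (x : ℂ))⁻¹
  set w' : ℝ → ℂ := fun x => -((1 + (x : ℂ)) ^ 2)⁻¹
  set v := trigComb ρ (3 / ρ ^ 2) ((3 - ρ ^ 2) / ρ ^ 3)
  set v' := trigComb ρ (ρ * ((3 - ρ ^ 2) / ρ ^ 3)) (-(ρ * (3 / ρ ^ 2)))
  have hU : IsOpen (Ioi (-1 : ℝ)) := isOpen_Ioi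
  have hφv : EqOn φ (darbouxTransform w v v') (Ioi (-1)) := fun x hx => by
    simpa only [hφ, hj₀, hj₂] using
      cos_add_sphericalBessel_eq_darbouxTransform hρ (one_add_ofReal_ne_zero hx)
  have hw : ∀ x ∈ Ioi (-1 : ℝ), HasDerivAt w (w' x) x := fun x hx =>
    hasDerivAt_inv_one_add (one_add_ofReal_ne_zero hx)
  have hv : ∀ x ∈ Ioi (-1 : ℝ), HasDerivAt v (v' x) x := fun x _ => hasDerivAt_trigComb _ _ _ x
  have hv' : ∀ x ∈ Ioi (-1 : ℝ), HasDerivAt v' ((w x ^ 2 + w' x - ρ ^ 2) * v x) x := fun x _ =>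
    (hasDerivAt_trigComb _ _ _ x).congr_deriv (by simp only [trigComb, v, w, w', inv_pow]; ring)
  have h0 : (0 : ℝ) ∈ Ioi (-1) := by norm_num
  refine ⟨fun x hx => ?_, by simp [hφ, hj₂], ?_⟩
  · have hq : (q x : ℂ) = w x ^ 2 - w' x := by
      simp only [hqdef, w, w', inv_pow]
      push_cast
      ring
    rw [hq]
    exact darbouxTransform_solves_of_eqOn hU hφv hw hv hv' (by simp; linarith [hx.1])
  · rw [deriv_eq_of_eqOn_darbouxTransform hU hφv hw hv hv' h0]
    simp only [w, v, v', trigComb]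
    field_simp
    simp
    ring
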